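/- Suppose A ∈ ℂ^{M×N} has ε-rank r, i.e. A = L + E with rank(L) = r and ‖E‖_F ≤ ε, and let x come from the randomized truncated SVD solver with oversampling parameter p ≥ 2. Then there is a deterministic bound: for every v ∈ ℂ^N, ‖b − Ax‖₂ ≤ ‖b − Av‖₂ + ε(1 + ‖ε⁻¹Σ₂Ω₂Ω₁†‖_F + ‖Ω₁†‖_F)‖v‖₂, where Σ₂, Ω₁, Ω₂ are as in the SVD/sketch decomposition. -/

import Mathlib

open Matrix

abbrev Vec (m : ℕ) := Matrix (Fin m) (Fin 1) ℂ

noncomputable def frobNorm {m n : ℕ} (A : Matrix (Fin m) (Fin n) ℂ) : ℝ :=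
  Real.sqrt (∑ i, ∑ j, ‖A i j‖ ^ 2)

noncomputable def specNorm {m n : ℕ} (A : Matrix (Fin m) (Fin n) ℂ) : ℝ :=
  ‖LinearMap.toContinuousLinearMap (Matrix.toEuclideanLin A)‖

set_option maxHeartbeats 1000000

section RSVDHelpers

attribute [local instance] Matrix.frobeniusNormedAddCommGroup Matrix.frobeniusNormedSpace

lemma frobNorm_eq {m n : ℕ} (A : Matrix (Fin m) (Fin n) ℂ) : frobNorm A = ‖A‖ := by
  rw [Matrix.frobenius_norm_def, frobNorm, Real.sqrt_eq_rpow]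
  congr 1
  refine Finset.sum_congr rfl fun i _ => Finset.sum_congr rfl fun j _ => ?_
  rw [← Real.rpow_natCast ‖A i j‖ 2]
  norm_num

lemma frobNorm_nonneg {m n : ℕ} (A : Matrix (Fin m) (Fin n) ℂ) : 0 ≤ frobNorm A :=
  Real.sqrt_nonneg _

lemma frobNorm_add_le {m n : ℕ} (A B : Matrix (Fin m) (Fin n) ℂ) :
    frobNorm (A + B) ≤ frobNorm A + frobNorm B := by
  simp only [frobNorm_eq]; exact norm_add_le A B

lemma frobNorm_neg {m n : ℕ} (A : Matrix (Fin m) (Fin n) ℂ) : frobNorm (-A) = frobNorm A := by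
  simp only [frobNorm_eq]; exact norm_neg A

lemma frobNorm_mul_le {a b c : ℕ} (A : Matrix (Fin a) (Fin b) ℂ) (B : Matrix (Fin b) (Fin c) ℂ) :
    frobNorm (A * B) ≤ frobNorm A * frobNorm B := by
  simp only [frobNorm_eq]; exact Matrix.frobenius_norm_mul A B

lemma frobNorm_smul {m n : ℕ} (c : ℂ) (A : Matrix (Fin m) (Fin n) ℂ) :
    frobNorm (c • A) = ‖c‖ * frobNorm A := by
  simp only [frobNorm_eq]; exact norm_smul c A

noncomputable def vsq {m : ℕ} (u : Vec m) : ℝ := ∑ i, ‖u i 0‖ ^ 2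

lemma vsq_nonneg {m : ℕ} (u : Vec m) : 0 ≤ vsq u :=
  Finset.sum_nonneg fun _ _ => by positivity

lemma frobNorm_vec {m : ℕ} (u : Vec m) : frobNorm u = Real.sqrt (vsq u) := by
  unfold frobNorm vsq
  congr 1
  exact Finset.sum_congr rfl fun i _ => by simp [Fin.sum_univ_one]

lemma entry00 {m : ℕ} (u w : Vec m) :
    (uᴴ * w) 0 0 = ∑ i, (starRingEnd ℂ) (u i 0) * w i 0 := by
  simp [Matrix.mul_apply, Matrix.conjTranspose_apply]

lemma ip_self {m : ℕ} (u : Vec m) : (uᴴ * u) 0 0 = (vsq u : ℂ) := by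
  rw [entry00, vsq]
  push_cast
  refine Finset.sum_congr rfl fun i _ => ?_
  rw [mul_comm, Complex.mul_conj, Complex.normSq_eq_norm_sq]
  push_cast
  ring

lemma vsq_add_of_orth {m : ℕ} (u w : Vec m) (h : (uᴴ * w) 0 0 = 0) :
    vsq (u + w) = vsq u + vsq w := by
  have h2 : (wᴴ * u) 0 0 = 0 := by
    have e : wᴴ * u = (uᴴ * w)ᴴ := by simp [Matrix.conjTranspose_mul]
    rw [e, Matrix.conjTranspose_apply, h, star_zero]
  have expand : ((u + w)ᴴ * (u + w)) 0 0 = (uᴴ * u) 0 0 + (wᴴ * w) 0 0 := by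
    rw [Matrix.conjTranspose_add, Matrix.add_mul, Matrix.mul_add, Matrix.mul_add]
    simp [Matrix.add_apply, h, h2]
  rw [ip_self, ip_self, ip_self] at expand
  exact_mod_cast expand

lemma frobNorm_vec_mono {m k : ℕ} {u : Vec k} {w : Vec m} (h : vsq u ≤ vsq w) :
    frobNorm u ≤ frobNorm w := by
  rw [frobNorm_vec, frobNorm_vec]; exact Real.sqrt_le_sqrt h

lemma proj_vsq_le {m : ℕ} (P : Matrix (Fin m) (Fin m) ℂ) (hP : Pᴴ = P) (hP2 : P * P = P)
    (v : Vec m) : vsq (P * v) ≤ vsq v := by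
  have hPP : P * (P * v) = P * v := by rw [← Matrix.mul_assoc, hP2]
  have horth : ((P * v)ᴴ * (v - P * v)) 0 0 = 0 := by
    have e : (P * v)ᴴ * (v - P * v) = 0 := by
      rw [Matrix.conjTranspose_mul, hP, Matrix.mul_sub, Matrix.mul_assoc, Matrix.mul_assoc,
        hPP, sub_self]
    rw [e]; rfl
  have key := vsq_add_of_orth (P * v) (v - P * v) horth
  rw [add_sub_cancel] at key
  have := vsq_nonneg (v - P * v)
  linarith

lemma proj_residual {m : ℕ} (P : Matrix (Fin m) (Fin m) ℂ) (hP : Pᴴ = P) (hP2 : P * P = P)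
    (b z : Vec m) : frobNorm (b - P * b) ≤ frobNorm (b - P * z) := by
  have horth : ((b - P * b)ᴴ * (P * (b - z))) 0 0 = 0 := by
    have e : (b - P * b)ᴴ * (P * (b - z)) = 0 := by
      have hPP2 : P * (P * (b - z)) = P * (b - z) := by rw [← Matrix.mul_assoc, hP2]
      rw [Matrix.conjTranspose_sub, Matrix.conjTranspose_mul, hP, Matrix.sub_mul,
        Matrix.mul_assoc, hPP2, sub_self]
    rw [e]; rfl
  have hdec : b - P * z = (b - P * b) + P * (b - z) := by
    rw [Matrix.mul_sub]; abel
  apply frobNorm_vec_mono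
  rw [hdec, vsq_add_of_orth _ _ horth]
  have := vsq_nonneg (P * (b - z))
  linarith

lemma isometry_frobNorm {m k : ℕ} (W : Matrix (Fin m) (Fin k) ℂ) (hW : Wᴴ * W = 1)
    (v : Vec k) : frobNorm (W * v) = frobNorm v := by
  rw [frobNorm_vec, frobNorm_vec]
  congr 1
  have e : ((W * v)ᴴ * (W * v)) 0 0 = (vᴴ * v) 0 0 := by
    rw [Matrix.conjTranspose_mul, Matrix.mul_assoc, ← Matrix.mul_assoc Wᴴ W v, hW,
      Matrix.one_mul]
  rw [ip_self, ip_self] at e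
  exact_mod_cast e

lemma contraction_frobNorm {m k : ℕ} (W : Matrix (Fin m) (Fin k) ℂ) (hW : Wᴴ * W = 1)
    (v : Vec m) : frobNorm (Wᴴ * v) ≤ frobNorm v := by
  have hP : (W * Wᴴ)ᴴ = W * Wᴴ := by simp [Matrix.conjTranspose_mul]
  have hP2 : (W * Wᴴ) * (W * Wᴴ) = W * Wᴴ := by
    rw [Matrix.mul_assoc, ← Matrix.mul_assoc Wᴴ W Wᴴ, hW, Matrix.one_mul]
  have e1 : (Wᴴ * v)ᴴ * (Wᴴ * v) = vᴴ * ((W * Wᴴ) * v) := by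
    rw [Matrix.conjTranspose_mul, conjTranspose_conjTranspose, Matrix.mul_assoc,
      ← Matrix.mul_assoc W Wᴴ v]
  have e2 : ((W * Wᴴ) * v)ᴴ * ((W * Wᴴ) * v) = vᴴ * ((W * Wᴴ) * v) := by
    rw [Matrix.conjTranspose_mul, hP, Matrix.mul_assoc,
      ← Matrix.mul_assoc (W * Wᴴ) (W * Wᴴ) v, hP2]
  have key : vsq (Wᴴ * v) = vsq ((W * Wᴴ) * v) := by
    have c1 := ip_self (Wᴴ * v)
    have c2 := ip_self ((W * Wᴴ) * v)
    rw [e1] at c1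
    rw [e2] at c2
    have h3 : ((vsq (Wᴴ * v) : ℂ)) = ((vsq ((W * Wᴴ) * v) : ℂ)) := by rw [← c1, ← c2]
    exact_mod_cast h3
  have hle : vsq (Wᴴ * v) ≤ vsq v := by rw [key]; exact proj_vsq_le (W * Wᴴ) hP hP2 v
  exact frobNorm_vec_mono hle

lemma frobNorm_eq_euclidean {k : ℕ} (u : Vec k) :
    frobNorm u = ‖(WithLp.equiv 2 (Fin k → ℂ)).symm (fun i => u i 0)‖ := by
  rw [frobNorm_vec, EuclideanSpace.norm_eq]
  congr 1

lemma spec_mul_vec {a b : ℕ} (M : Matrix (Fin a) (Fin b) ℂ) (w : Vec b) :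
    frobNorm (M * w) ≤ specNorm M * frobNorm w := by
  rw [frobNorm_eq_euclidean, frobNorm_eq_euclidean]
  have hvec : (fun i => (M * w) i 0) = M *ᵥ (fun j => w j 0) := by
    funext i
    simp [Matrix.mul_apply, Matrix.mulVec, dotProduct]
  simp only [WithLp.equiv_symm_apply]
  rw [hvec, ← Matrix.toEuclideanLin_apply_piLp_toLp]
  have := (LinearMap.toContinuousLinearMap (Matrix.toEuclideanLin M)).le_opNorm
    ((WithLp.equiv 2 (Fin b → ℂ)).symm (fun j => w j 0))
  simpa [specNorm] using this

lemma blocks_of_iso {m a c : ℕ} (W₁ : Matrix (Fin m) (Fin a) ℂ) (W₂ : Matrix (Fin m) (Fin c) ℂ)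
    (h : (Matrix.fromCols W₁ W₂)ᴴ * Matrix.fromCols W₁ W₂ = 1) :
    W₁ᴴ * W₁ = 1 ∧ W₂ᴴ * W₂ = 1 ∧ W₂ᴴ * W₁ = 0 := by
  rw [Matrix.conjTranspose_fromCols_eq_fromRows_conjTranspose,
    Matrix.fromRows_mul_fromCols, ← Matrix.fromBlocks_one, Matrix.fromBlocks_inj] at h
  exact ⟨h.1, h.2.2.2, h.2.2.1⟩

end RSVDHelpers

/-- **Deterministic residual bound for the randomized truncated SVD solver.**
`A = U₁Σ₁V₁* + U₂Σ₂V₂*` with `rank(U₁Σ₁V₁*) = r`, `‖Σ₂‖_F ≤ ε`; the sketch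
`Ã = AΩ` has block SVD `Ũ₁Σ̃₁Ṽ₁* + Ũ₂Σ̃₂Ṽ₂*` with `‖Σ̃₂‖₂ ≤ ε`;
`Ω₁ = V₁*Ω` has right inverse `Ω₁†`; `x = Ω Ṽ₁ Σ̃₁⁻¹ Ũ₁* b`. Then for all `v`,
`‖b − Ax‖₂ ≤ ‖b − Av‖₂ + ε(1 + ‖ε⁻¹Σ₂Ω₂Ω₁†‖_F + ‖Ω₁†‖_F)‖v‖₂`. -/
theorem randomized_svd_deterministic_bound {M N r s p rt st : ℕ} (hp : 2 ≤ p)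
    (A : Matrix (Fin M) (Fin N) ℂ) (b : Vec M) (ε : ℝ) (hε : 0 < ε)
    -- block SVD of A
    (U₁ : Matrix (Fin M) (Fin r) ℂ) (U₂ : Matrix (Fin M) (Fin s) ℂ)
    (V₁ : Matrix (Fin N) (Fin r) ℂ) (V₂ : Matrix (Fin N) (Fin s) ℂ)
    (S₁ : Matrix (Fin r) (Fin r) ℂ) (S₂ : Matrix (Fin s) (Fin s) ℂ)
    (hA : A = U₁ * S₁ * V₁ᴴ + U₂ * S₂ * V₂ᴴ)
    (hU : (Matrix.fromCols U₁ U₂)ᴴ * Matrix.fromCols U₁ U₂ = 1)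
    (hV : (Matrix.fromCols V₁ V₂)ᴴ * Matrix.fromCols V₁ V₂ = 1)
    (hrank : (U₁ * S₁ * V₁ᴴ).rank = r)
    (hS₂ : frobNorm S₂ ≤ ε)
    -- Gaussian sketch and right inverse of Ω₁ = V₁ᴴ Ω
    (Ω : Matrix (Fin N) (Fin (r + p)) ℝ)
    (Ω₁d : Matrix (Fin (r + p)) (Fin r) ℂ)
    (hright : (V₁ᴴ * Ω.map Complex.ofReal) * Ω₁d = 1)
    -- block SVD of the sketched matrix Ã = AΩ
    (Ut₁ : Matrix (Fin M) (Fin rt) ℂ) (Ut₂ : Matrix (Fin M) (Fin st) ℂ)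
    (Vt₁ : Matrix (Fin (r + p)) (Fin rt) ℂ) (Vt₂ : Matrix (Fin (r + p)) (Fin st) ℂ)
    (St₁ St₁inv : Matrix (Fin rt) (Fin rt) ℂ) (St₂ : Matrix (Fin st) (Fin st) ℂ)
    (hAt : A * Ω.map Complex.ofReal = Ut₁ * St₁ * Vt₁ᴴ + Ut₂ * St₂ * Vt₂ᴴ)
    (hUt : (Matrix.fromCols Ut₁ Ut₂)ᴴ * Matrix.fromCols Ut₁ Ut₂ = 1)
    (hVt : (Matrix.fromCols Vt₁ Vt₂)ᴴ * Matrix.fromCols Vt₁ Vt₂ = 1)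
    (hSt₁ : St₁ * St₁inv = 1) (hSt₁' : St₁inv * St₁ = 1)
    (hSt₂ : specNorm St₂ ≤ ε)
    -- the computed solution
    (x : Vec N)
    (hx : x = Ω.map Complex.ofReal * (Vt₁ * St₁inv * Ut₁ᴴ * b)) :
    ∀ v : Vec N,
      frobNorm (b - A * x) ≤ frobNorm (b - A * v)
        + ε * (1 + frobNorm (((ε : ℂ))⁻¹ • (S₂ * (V₂ᴴ * Ω.map Complex.ofReal) * Ω₁d))
                 + frobNorm Ω₁d) * frobNorm v := by
  intro v
  obtain ⟨hU1, hU2, hU21⟩ := blocks_of_iso U₁ U₂ hU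
  obtain ⟨hV1, hV2, hV21⟩ := blocks_of_iso V₁ V₂ hV
  obtain ⟨hUt1, hUt2, hUt21⟩ := blocks_of_iso Ut₁ Ut₂ hUt
  obtain ⟨hVt1, hVt2, hVt21⟩ := blocks_of_iso Vt₁ Vt₂ hVt
  set Ωc : Matrix (Fin N) (Fin (r + p)) ℂ := Ω.map Complex.ofReal with hΩc
  set y : Vec (r + p) := Ω₁d * (V₁ᴴ * v) with hy
  -- projector facts
  have hP : (Ut₁ * Ut₁ᴴ)ᴴ = Ut₁ * Ut₁ᴴ := by simp [Matrix.conjTranspose_mul]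
  have hP2 : (Ut₁ * Ut₁ᴴ) * (Ut₁ * Ut₁ᴴ) = Ut₁ * Ut₁ᴴ := by
    rw [Matrix.mul_assoc, ← Matrix.mul_assoc Ut₁ᴴ Ut₁ Ut₁ᴴ, hUt1, Matrix.one_mul]
  -- rewrite rules
  have c1 : ∀ (q : ℕ) (w : Matrix (Fin rt) (Fin q) ℂ), Vt₁ᴴ * (Vt₁ * w) = w := by
    intro q w; rw [← Matrix.mul_assoc, hVt1, Matrix.one_mul]
  have c2 : ∀ (q : ℕ) (w : Matrix (Fin rt) (Fin q) ℂ), Vt₂ᴴ * (Vt₁ * w) = 0 := by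
    intro q w; rw [← Matrix.mul_assoc, hVt21, Matrix.zero_mul]
  have c3 : ∀ (q : ℕ) (w : Matrix (Fin rt) (Fin q) ℂ), St₁ * (St₁inv * w) = w := by
    intro q w; rw [← Matrix.mul_assoc, hSt₁, Matrix.one_mul]
  -- Step A : A x = P b
  have hAx : A * x = (Ut₁ * Ut₁ᴴ) * b := by
    rw [hx, ← Matrix.mul_assoc, hAt]
    simp only [Matrix.add_mul, Matrix.mul_assoc, c1, c2, c3, Matrix.mul_zero, add_zero]
  -- expansion of A (Ωc y) via the sketch SVD
  have hkey1 : A * (Ωc * y) = Ut₁ * (St₁ * (Vt₁ᴴ * y)) + Ut₂ * (St₂ * (Vt₂ᴴ * y)) := by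
    rw [← Matrix.mul_assoc, hAt]
    simp only [Matrix.add_mul, Matrix.mul_assoc]
  -- expansion of A (Ωc y) via the SVD of A
  have hVy : V₁ᴴ * (Ωc * y) = V₁ᴴ * v := by
    rw [hy, ← Matrix.mul_assoc, ← Matrix.mul_assoc, hright, Matrix.one_mul]
  have hV2y : V₂ᴴ * (Ωc * y) = (V₂ᴴ * Ωc) * (Ω₁d * (V₁ᴴ * v)) := by
    rw [hy, ← Matrix.mul_assoc]
  have hkey2 : A * (Ωc * y)
      = U₁ * (S₁ * (V₁ᴴ * v)) + U₂ * (S₂ * ((V₂ᴴ * Ωc) * (Ω₁d * (V₁ᴴ * v)))) := by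
    rw [hA]
    simp only [Matrix.add_mul, Matrix.mul_assoc]
    rw [hVy, hV2y]
  have hAv : A * v = U₁ * (S₁ * (V₁ᴴ * v)) + U₂ * (S₂ * (V₂ᴴ * v)) := by
    rw [hA]; simp only [Matrix.add_mul, Matrix.mul_assoc]
  -- step 1 : projection optimality
  have habs : (Ut₁ * Ut₁ᴴ) * (Ut₁ * (St₁ * (Vt₁ᴴ * y))) = Ut₁ * (St₁ * (Vt₁ᴴ * y)) := by
    rw [Matrix.mul_assoc, ← Matrix.mul_assoc Ut₁ᴴ Ut₁ _, hUt1, Matrix.one_mul]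
  have step1 : frobNorm (b - A * x) ≤ frobNorm (b - Ut₁ * (St₁ * (Vt₁ᴴ * y))) := by
    rw [hAx, ← habs]
    exact proj_residual _ hP hP2 b _
  -- step 2 : triangle with sketch tail
  have hsplit : b - Ut₁ * (St₁ * (Vt₁ᴴ * y))
      = (b - A * (Ωc * y)) + Ut₂ * (St₂ * (Vt₂ᴴ * y)) := by
    rw [hkey1]; abel
  have step2 : frobNorm (b - Ut₁ * (St₁ * (Vt₁ᴴ * y)))
      ≤ frobNorm (b - A * (Ωc * y)) + frobNorm (Ut₂ * (St₂ * (Vt₂ᴴ * y))) := by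
    rw [hsplit]; exact frobNorm_add_le _ _
  -- tail term bound
  have hynorm : frobNorm y ≤ frobNorm Ω₁d * frobNorm v := by
    have h1 : frobNorm y ≤ frobNorm Ω₁d * frobNorm (V₁ᴴ * v) := by
      rw [hy]; exact frobNorm_mul_le _ _
    have h2 : frobNorm (V₁ᴴ * v) ≤ frobNorm v := contraction_frobNorm V₁ hV1 v
    calc frobNorm y ≤ frobNorm Ω₁d * frobNorm (V₁ᴴ * v) := h1
      _ ≤ frobNorm Ω₁d * frobNorm v :=
          mul_le_mul_of_nonneg_left h2 (frobNorm_nonneg _)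
  have t2 : frobNorm (Ut₂ * (St₂ * (Vt₂ᴴ * y))) ≤ ε * (frobNorm Ω₁d * frobNorm v) := by
    rw [isometry_frobNorm Ut₂ hUt2]
    calc frobNorm (St₂ * (Vt₂ᴴ * y)) ≤ specNorm St₂ * frobNorm (Vt₂ᴴ * y) :=
          spec_mul_vec _ _
      _ ≤ ε * frobNorm (Vt₂ᴴ * y) :=
          mul_le_mul_of_nonneg_right hSt₂ (frobNorm_nonneg _)
      _ ≤ ε * frobNorm y :=
          mul_le_mul_of_nonneg_left (contraction_frobNorm Vt₂ hVt2 y) hε.le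
      _ ≤ ε * (frobNorm Ω₁d * frobNorm v) := mul_le_mul_of_nonneg_left hynorm hε.le
  -- main residual split
  have hsplit2 : b - A * (Ωc * y)
      = (b - A * v) + (U₂ * (S₂ * (V₂ᴴ * v))
        + -(U₂ * (S₂ * ((V₂ᴴ * Ωc) * (Ω₁d * (V₁ᴴ * v)))))) := by
    rw [hkey2, hAv]; abel
  have t1 : frobNorm (b - A * (Ωc * y)) ≤ frobNorm (b - A * v)
      + (frobNorm (U₂ * (S₂ * (V₂ᴴ * v)))
        + frobNorm (U₂ * (S₂ * ((V₂ᴴ * Ωc) * (Ω₁d * (V₁ᴴ * v)))))) := by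
    rw [hsplit2]
    refine le_trans (frobNorm_add_le _ _) ?_
    have h4 := frobNorm_add_le (U₂ * (S₂ * (V₂ᴴ * v)))
      (-(U₂ * (S₂ * ((V₂ᴴ * Ωc) * (Ω₁d * (V₁ᴴ * v))))))
    rw [frobNorm_neg] at h4
    linarith
  -- bound the two correction terms
  have tA : frobNorm (U₂ * (S₂ * (V₂ᴴ * v))) ≤ ε * frobNorm v := by
    rw [isometry_frobNorm U₂ hU2]
    calc frobNorm (S₂ * (V₂ᴴ * v)) ≤ frobNorm S₂ * frobNorm (V₂ᴴ * v) := frobNorm_mul_le _ _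
      _ ≤ ε * frobNorm v :=
          mul_le_mul hS₂ (contraction_frobNorm V₂ hV2 v) (frobNorm_nonneg _) hε.le
  have hscale : frobNorm (S₂ * (V₂ᴴ * Ωc) * Ω₁d)
      = ε * frobNorm (((ε : ℂ))⁻¹ • (S₂ * (V₂ᴴ * Ωc) * Ω₁d)) := by
    rw [frobNorm_smul, norm_inv, Complex.norm_real, Real.norm_of_nonneg hε.le]
    field_simp
  have tB : frobNorm (U₂ * (S₂ * ((V₂ᴴ * Ωc) * (Ω₁d * (V₁ᴴ * v)))))
      ≤ ε * frobNorm (((ε : ℂ))⁻¹ • (S₂ * (V₂ᴴ * Ωc) * Ω₁d)) * frobNorm v := by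
    rw [isometry_frobNorm U₂ hU2]
    have e : S₂ * ((V₂ᴴ * Ωc) * (Ω₁d * (V₁ᴴ * v))) = (S₂ * (V₂ᴴ * Ωc) * Ω₁d) * (V₁ᴴ * v) := by
      simp only [Matrix.mul_assoc]
    rw [e]
    calc frobNorm ((S₂ * (V₂ᴴ * Ωc) * Ω₁d) * (V₁ᴴ * v))
        ≤ frobNorm (S₂ * (V₂ᴴ * Ωc) * Ω₁d) * frobNorm (V₁ᴴ * v) := frobNorm_mul_le _ _
      _ ≤ frobNorm (S₂ * (V₂ᴴ * Ωc) * Ω₁d) * frobNorm v :=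
          mul_le_mul_of_nonneg_left (contraction_frobNorm V₁ hV1 v) (frobNorm_nonneg _)
      _ = ε * frobNorm (((ε : ℂ))⁻¹ • (S₂ * (V₂ᴴ * Ωc) * Ω₁d)) * frobNorm v := by
          rw [hscale]
  -- combine everything
  have expand : ε * (1 + frobNorm (((ε : ℂ))⁻¹ • (S₂ * (V₂ᴴ * Ωc) * Ω₁d)) + frobNorm Ω₁d)
      * frobNorm v
      = ε * frobNorm v + ε * frobNorm (((ε : ℂ))⁻¹ • (S₂ * (V₂ᴴ * Ωc) * Ω₁d)) * frobNorm v
        + ε * (frobNorm Ω₁d * frobNorm v) := by ring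
  linarith
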